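/- arXiv:2207.01704 — 2 statements merged into one kernel-verified Lean document; each statement's English description precedes it below -/
import Mathlib

section
/- Let p be a positive integer and let Λ_g[p] be the subgroup of Sp(2g,ℤ) consisting of matrices A with A·e₁ = e₁ + p·a₁, where (a₁,…,a_g,e₁,…,e_g) is a fixed symplectic basis and ∧ denotes the symplectic pairing. Then the map φ : Λ_g[p] → ℤ/pℤ defined by φ(A) = (1/p)(A·e₁ ∧ e₁) mod p is a group homomorphism. -/
/-- For a positive integer `p`, on the standard symplectic `ℤ`-module
`(Fin g ⊕ Fin g) → ℤ` with symplectic pairing `ω` (where `a i = Pi.single (inl i) 1` and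
`e i = Pi.single (inr i) 1` form a symplectic basis with `a i ∧ e j = δᵢⱼ`), let `Λ` be the
set of symplectic automorphisms `A` with `A e₁ = e₁ + p • u` for some `u`.  Then the map
`φ(A) = (1/p)(A e₁ ∧ e₁) mod p` is a group homomorphism: `Λ` is closed under composition and
`φ(A ∘ B) = φ(A) + φ(B)`. -/
theorem stmt0 (g : ℕ) (hg : 0 < g) (p : ℕ) (hp : 0 < p)
    (ω : ((Fin g ⊕ Fin g) → ℤ) → ((Fin g ⊕ Fin g) → ℤ) → ℤ)
    (hω : ∀ v w, ω v w =
      ∑ i : Fin g, (v (Sum.inl i) * w (Sum.inr i) - v (Sum.inr i) * w (Sum.inl i)))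
    (e₁ : (Fin g ⊕ Fin g) → ℤ) (he : e₁ = Pi.single (Sum.inr ⟨0, hg⟩) 1)
    (Λ : Set (((Fin g ⊕ Fin g) → ℤ) →ₗ[ℤ] ((Fin g ⊕ Fin g) → ℤ)))
    (hΛ : ∀ A, A ∈ Λ ↔
      ((∀ v w, ω (A v) (A w) = ω v w) ∧ Function.Bijective A ∧
        ∃ u, A e₁ = e₁ + (p : ℤ) • u))
    (φ : (((Fin g ⊕ Fin g) → ℤ) →ₗ[ℤ] ((Fin g ⊕ Fin g) → ℤ)) → ZMod p)
    (hφ : ∀ A, φ A = ((ω (A e₁) e₁ / (p : ℤ) : ℤ) : ZMod p)) :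
    ∀ A B, A ∈ Λ → B ∈ Λ → (A ∘ₗ B) ∈ Λ ∧ φ (A ∘ₗ B) = φ A + φ B := by
  have hpz : (p : ℤ) ≠ 0 := by exact_mod_cast hp.ne'
  -- bilinearity facts
  have hadd₁ : ∀ v v' w, ω (v + v') w = ω v w + ω v' w := by
    intro v v' w
    simp only [hω, Pi.add_apply, ← Finset.sum_add_distrib]
    exact Finset.sum_congr rfl fun i _ => by ring
  have hsmul₁ : ∀ (c : ℤ) v w, ω (c • v) w = c * ω v w := by
    intro c v w
    simp only [hω, Pi.smul_apply, smul_eq_mul, Finset.mul_sum]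
    exact Finset.sum_congr rfl fun i _ => by ring
  have hadd₂ : ∀ v w w', ω v (w + w') = ω v w + ω v w' := by
    intro v w w'
    simp only [hω, Pi.add_apply, ← Finset.sum_add_distrib]
    exact Finset.sum_congr rfl fun i _ => by ring
  have hsmul₂ : ∀ (c : ℤ) v w, ω v (c • w) = c * ω v w := by
    intro c v w
    simp only [hω, Pi.smul_apply, smul_eq_mul, Finset.mul_sum]
    exact Finset.sum_congr rfl fun i _ => by ring
  have hself : ∀ v, ω v v = 0 := by
    intro v
    simp only [hω]
    exact Finset.sum_eq_zero fun i _ => by ring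
  intro A B hA hB
  obtain ⟨hAω, hAbij, uA, hAe⟩ := (hΛ A).1 hA
  obtain ⟨hBω, hBbij, uB, hBe⟩ := (hΛ B).1 hB
  have hABe : (A ∘ₗ B) e₁ = e₁ + (p : ℤ) • (uA + A uB) := by
    simp only [LinearMap.comp_apply, hBe, map_add, map_smul, hAe, smul_add]
    abel
  constructor
  · rw [hΛ]
    exact ⟨fun v w => by simp [LinearMap.comp_apply, hAω, hBω],
      hAbij.comp hBbij, ⟨uA + A uB, hABe⟩⟩
  · -- compute φ values
    have key : ∀ (u : (Fin g ⊕ Fin g) → ℤ), ω (e₁ + (p : ℤ) • u) e₁ = (p : ℤ) * ω u e₁ := by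
      intro u
      rw [hadd₁, hsmul₁, hself]; ring
    have hφA : φ A = ((ω uA e₁ : ℤ) : ZMod p) := by
      rw [hφ, hAe, key, Int.mul_ediv_cancel_left _ hpz]
    have hφB : φ B = ((ω uB e₁ : ℤ) : ZMod p) := by
      rw [hφ, hBe, key, Int.mul_ediv_cancel_left _ hpz]
    have hφAB : φ (A ∘ₗ B) = ((ω (uA + A uB) e₁ : ℤ) : ZMod p) := by
      rw [hφ, hABe, key, Int.mul_ediv_cancel_left _ hpz]
    -- ω (A uB) e₁ ≡ ω uB e₁ mod p
    have hmod : ω (A uB) e₁ = ω uB e₁ - (p : ℤ) * ω (A uB) uA := by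
      have h1 : ω (A uB) (A e₁) = ω uB e₁ := hAω uB e₁
      rw [hAe, hadd₂, hsmul₂] at h1
      linarith
    rw [hφAB, hφA, hφB, hadd₁, hmod]
    push_cast
    rw [ZMod.natCast_self]
    ring
end

section
/- With notation as above, the homomorphism φ : Λ_g[p] → ℤ/pℤ given by φ(A) = (1/p)(A·e₁ ∧ e₁) mod p is surjective. Consequently the abelianization H₁(Λ_g[p];ℤ) has order at least p. -/
/-!
The block matrix `T = [[1, p·E₁₁], [0, 1]]` is symplectic (its off-diagonal block is symmetric)
and sends `e₁` to `e₁ + p·a₁`, so `T ∈ Λ_g[p]`; its pairing `T·e₁ ∧ e₁` is `-p`, so `φ(T) = -1`,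
which generates `ℤ/p`. As `ℤ/p` is abelian, `φ` factors through the abelianization, which
therefore surjects onto a set of `p` elements.
-/

open Matrix

namespace Matrix

variable {l R : Type*} [Fintype l] [DecidableEq l] [CommRing R]

theorem fromBlocks_one_zero_one_mem_symplecticGroup {B : Matrix l l R} (hB : B.IsSymm) :
    fromBlocks 1 B 0 1 ∈ symplecticGroup l R :=
  SymplecticGroup.fromBlocks_mem_iff.2 ⟨by simp, by simpa using hB.eq, by simp⟩

def symplecticTransvection (i : l) (c : R) : symplecticGroup l R :=
  ⟨fromBlocks 1 (single i i c) 0 1,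
    fromBlocks_one_zero_one_mem_symplecticGroup (by simp [IsSymm, transpose_single])⟩

theorem symplecticTransvection_mulVec_single_inr (i : l) (c : R) :
    (symplecticTransvection i c : Matrix (l ⊕ l) (l ⊕ l) R) *ᵥ Pi.single (Sum.inr i) 1 =
      Pi.single (Sum.inr i) 1 + c • Pi.single (Sum.inl i) 1 := by
  ext (j | j) <;> rcases eq_or_ne j i with rfl | h <;>
    simp [symplecticTransvection, fromBlocks, *, Ne.symm]

theorem J_mulVec_single_inr (i : l) :
    J l R *ᵥ Pi.single (Sum.inr i) 1 = -Pi.single (Sum.inl i) 1 := by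
  ext (j | j) <;> rcases eq_or_ne j i with rfl | h <;> simp [J, fromBlocks, *]

theorem symplecticTransvection_mulVec_single_inr_dotProduct_J (i : l) (c : R) :
    ((symplecticTransvection i c : Matrix (l ⊕ l) (l ⊕ l) R) *ᵥ Pi.single (Sum.inr i) 1) ⬝ᵥ
      (J l R *ᵥ Pi.single (Sum.inr i) 1) = -c := by
  rw [symplecticTransvection_mulVec_single_inr, J_mulVec_single_inr]
  simp

end Matrix

theorem ZMod.surjective_of_map_eq_ofAdd_neg_one {G : Type*} [Group G] {n : ℕ}
    (f : G →* Multiplicative (ZMod n)) {x : G} (hx : f x = Multiplicative.ofAdd (-1)) :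
    Function.Surjective f := fun c =>
  ⟨x ^ (-(Multiplicative.toAdd c).cast : ℤ), by simp [hx, ← ofAdd_zsmul]⟩

theorem Abelianization.mk_le_of_surjective {G A : Type _} [Group G] [CommGroup A] (f : G →* A)
    (hf : Function.Surjective f) : Cardinal.mk A ≤ Cardinal.mk (Abelianization G) :=
  Cardinal.mk_le_of_surjective (f := lift f) fun a =>
    let ⟨x, hx⟩ := hf a
    ⟨of x, by rw [lift_apply_of, hx]⟩

/-- With `Λ = Λ_g[p] ≤ Sp(2g,ℤ)` the subgroup of symplectic matrices `A` with
`A·e₁ = e₁ + p·a₁` (i.e. `A·e₁ ≡ e₁ mod p`), the homomorphism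
`φ(A) = (1/p)(A·e₁ ∧ e₁) mod p` to `ℤ/pℤ` is surjective; consequently the abelianization
`H₁(Λ_g[p];ℤ)` has order (cardinality) at least `p`. -/
theorem stmt1 (g : ℕ) (hg : 0 < g) (p : ℕ) (hp : 0 < p)
    (e₁ : (Fin g ⊕ Fin g) → ℤ) (he : e₁ = Pi.single (Sum.inr ⟨0, hg⟩) 1)
    (Λ : Subgroup (Matrix.symplecticGroup (Fin g) ℤ))
    (hΛ : ∀ A : Matrix.symplecticGroup (Fin g) ℤ,
      A ∈ Λ ↔ ∃ u, (A : Matrix (Fin g ⊕ Fin g) (Fin g ⊕ Fin g) ℤ) *ᵥ e₁ = e₁ + (p : ℤ) • u)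
    (φ : Λ → ZMod p)
    (hhom : ∀ A B : Λ, φ (A * B) = φ A + φ B)
    (hφ : ∀ A : Λ, φ A =
      (((((A : Matrix.symplecticGroup (Fin g) ℤ) :
          Matrix (Fin g ⊕ Fin g) (Fin g ⊕ Fin g) ℤ) *ᵥ e₁) ⬝ᵥ
          (Matrix.J (Fin g) ℤ *ᵥ e₁) / (p : ℤ) : ℤ) : ZMod p)) :
    Function.Surjective φ ∧ (p : Cardinal) ≤ Cardinal.mk (Abelianization Λ) := by
  have : NeZero p := NeZero.of_pos hp
  subst he
  let T : Λ := ⟨symplecticTransvection _ p,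
    (hΛ _).2 ⟨_, symplecticTransvection_mulVec_single_inr _ _⟩⟩
  have hφT : φ T = -1 := by
    rw [hφ, symplecticTransvection_mulVec_single_inr_dotProduct_J,
      Int.neg_ediv_self _ (by exact_mod_cast hp.ne')]
    simp
  let ψ : Λ →* Multiplicative (ZMod p) :=
    MonoidHom.mk' (fun A => .ofAdd (φ A)) fun A B => congrArg _ (hhom A B)
  have hψ : Function.Surjective ψ :=
    ZMod.surjective_of_map_eq_ofAdd_neg_one ψ (x := T) (congrArg Multiplicative.ofAdd hφT)
  refine ⟨Multiplicative.toAdd.surjective.comp hψ, ?_⟩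
  calc (p : Cardinal) = Cardinal.mk (Multiplicative (ZMod p)) := by
        rw [← Nat.cast_card, Nat.card_congr Multiplicative.toAdd, Nat.card_zmod]
    _ ≤ Cardinal.mk (Abelianization Λ) := Abelianization.mk_le_of_surjective ψ hψ
end
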